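/- arXiv:2311.18271 — 6 statements merged into one kernel-verified Lean document; each statement's English description precedes it below -/
import Mathlib

section
/- Let n be a positive integer, let H₀ and H be n×n complex matrices, set H₁ = H − H₀, H₁ᴵ(s) = exp(isH₀) · H₁ · exp(−isH₀), and Uᴵ(t, t₀) = exp(itH₀) · exp(−i(t−t₀)H) · exp(−it₀H₀). Then for all real t₀ and t, the propagator satisfies the Volterra integral equation Uᴵ(t, t₀) = 1 − i ∫_{t₀}^{t} H₁ᴵ(s) · Uᴵ(s, t₀) ds. -/
open NormedSpace Matrix

attribute [local instance] Matrix.linftyOpNormedRing Matrix.linftyOpNormedAlgebra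

private theorem expDeriv {n : ℕ} (A : Matrix (Fin n) (Fin n) ℂ) (s : ℝ) :
    HasDerivAt (fun u : ℝ => exp ((u:ℂ) • A)) (exp ((s:ℂ) • A) * A) s := by
  have h : HasDerivAt (fun u : ℂ => exp (u • A)) (exp ((s:ℂ) • A) * A) ((s:ℝ):ℂ) :=
    hasDerivAt_exp_smul_const A (s:ℂ)
  convert HasDerivAt.scomp (x := s) h Complex.ofRealCLM.hasDerivAt using 1 <;> first | rfl | simp

private noncomputable def entryCLM (n : ℕ) (i j : Fin n) :
    Matrix (Fin n) (Fin n) ℂ →L[ℂ] ℂ :=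
  LinearMap.toContinuousLinearMap
    { toFun := fun M => M i j, map_add' := fun _ _ => rfl, map_smul' := fun _ _ => rfl }

private theorem expCont {n : ℕ} (A : Matrix (Fin n) (Fin n) ℂ) :
    Continuous fun s : ℝ => exp ((s:ℂ) • A) :=
  exp_continuous.comp (Complex.continuous_ofReal.smul continuous_const)

/-- The interaction-picture propagator satisfies (entrywise) the Volterra
integral equation `Uᴵ(t,t₀) = 1 - i ∫_{t₀}^{t} H₁ᴵ(s) Uᴵ(s,t₀) ds`. -/
theorem interaction_picture_volterra_equation (n : ℕ) (hn : 0 < n)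
    (H₀ H H₁ : Matrix (Fin n) (Fin n) ℂ) (hH₁ : H₁ = H - H₀)
    (H₁I : ℝ → Matrix (Fin n) (Fin n) ℂ)
    (hH₁I : ∀ s : ℝ, H₁I s =
      NormedSpace.exp ((Complex.I * (s : ℂ)) • H₀) * H₁ * NormedSpace.exp ((-(Complex.I * (s : ℂ))) • H₀))
    (U : ℝ → ℝ → Matrix (Fin n) (Fin n) ℂ)
    (hU : ∀ t t₀ : ℝ, U t t₀ =
      NormedSpace.exp ((Complex.I * (t : ℂ)) • H₀) *
        NormedSpace.exp ((-(Complex.I * ((t : ℂ) - (t₀ : ℂ)))) • H) *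
        NormedSpace.exp ((-(Complex.I * (t₀ : ℂ))) • H₀))
    (t₀ t : ℝ) :
    ∀ i j : Fin n,
      U t t₀ i j = (1 : Matrix (Fin n) (Fin n) ℂ) i j -
        Complex.I * ∫ s in t₀..t, (H₁I s * U s t₀) i j := by
  intro i j
  set A : Matrix (Fin n) (Fin n) ℂ := Complex.I • H₀ with hAdef
  set B : Matrix (Fin n) (Fin n) ℂ := -(Complex.I • H) with hBdef
  set K : Matrix (Fin n) (Fin n) ℂ :=
    exp ((Complex.I * (t₀:ℂ)) • H) * exp ((-(Complex.I * (t₀:ℂ))) • H₀) with hKdef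
  have hA : ∀ s : ℝ, (Complex.I * (s:ℂ)) • H₀ = (s:ℂ) • A := by
    intro s; rw [hAdef, smul_smul, mul_comm]
  have hAneg : ∀ s : ℝ, (-(Complex.I * (s:ℂ))) • H₀ = (s:ℂ) • (-A) := by
    intro s; rw [hAdef]; module
  -- the factored form of U
  have key : ∀ s : ℝ, U s t₀ = exp ((s:ℂ) • A) * exp ((s:ℂ) • B) * K := by
    intro s
    rw [hU, hA]
    have h2 : (-(Complex.I * ((s:ℂ) - (t₀:ℂ)))) • H =
        (s:ℂ) • B + (Complex.I * (t₀:ℂ)) • H := by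
      rw [hBdef]; module
    have hc : Commute ((s:ℂ) • B) ((Complex.I * (t₀:ℂ)) • H) := by
      rw [hBdef]
      exact ((((Commute.refl H).smul_right _).smul_left Complex.I).neg_left).smul_left (s:ℂ)
    rw [h2, Matrix.exp_add_of_commute _ _ hc, hKdef, mul_assoc, mul_assoc, mul_assoc]
  -- H₁I in factored form
  have keyH : ∀ s : ℝ, H₁I s = exp ((s:ℂ) • A) * H₁ * exp ((s:ℂ) • (-A)) := by
    intro s; rw [hH₁I, hA, hAneg]
  have hinv : ∀ s : ℝ, exp ((s:ℂ) • (-A)) * exp ((s:ℂ) • A) = 1 := by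
    intro s
    rw [← Matrix.exp_add_of_commute _ _ (((Commute.refl A).neg_left).smul_left _ |>.smul_right _)]
    rw [smul_neg, neg_add_cancel, exp_zero]
  -- the derivative of s ↦ U s t₀
  have hd : ∀ s : ℝ, HasDerivAt (fun u : ℝ => U u t₀)
      ((-Complex.I) • (H₁I s * U s t₀)) s := by
    intro s
    have hfun : (fun u : ℝ => U u t₀) =
        fun u : ℝ => exp ((u:ℂ) • A) * exp ((u:ℂ) • B) * K := funext fun u => key u
    rw [hfun]
    have hprod := ((expDeriv A s).mul (expDeriv B s)).mul_const K
    have hval : (-Complex.I) • (H₁I s * U s t₀) =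
        (exp ((s:ℂ) • A) * A * exp ((s:ℂ) • B) +
          exp ((s:ℂ) • A) * (exp ((s:ℂ) • B) * B)) * K := by
      rw [keyH, key]
      have hAB : (-Complex.I) • H₁ = A + B := by
        rw [hH₁, hAdef, hBdef]; module
      have hBcomm : exp ((s:ℂ) • B) * B = B * exp ((s:ℂ) • B) :=
        (((Commute.refl B).smul_left (s:ℂ)).exp_left).eq
      calc (-Complex.I) • (exp ((s:ℂ) • A) * H₁ * exp ((s:ℂ) • (-A)) *
              (exp ((s:ℂ) • A) * exp ((s:ℂ) • B) * K))
          = exp ((s:ℂ) • A) * ((-Complex.I) • H₁) *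
              (exp ((s:ℂ) • (-A)) * exp ((s:ℂ) • A)) * exp ((s:ℂ) • B) * K := by
            simp only [smul_mul_assoc, mul_smul_comm, mul_assoc]
        _ = exp ((s:ℂ) • A) * (A + B) * exp ((s:ℂ) • B) * K := by
            rw [hAB, hinv, mul_one]
        _ = (exp ((s:ℂ) • A) * A * exp ((s:ℂ) • B) +
              exp ((s:ℂ) • A) * (exp ((s:ℂ) • B) * B)) * K := by
            rw [hBcomm]; noncomm_ring
    rw [hval]
    exact hprod
  -- entrywise derivative
  set L : Matrix (Fin n) (Fin n) ℂ →L[ℝ] ℂ := (entryCLM n i j).restrictScalars ℝ with hLdef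
  have hLapp : ∀ M : Matrix (Fin n) (Fin n) ℂ, L M = M i j := fun _ => rfl
  have hdij : ∀ s : ℝ, HasDerivAt (fun u : ℝ => U u t₀ i j)
      (-(Complex.I * (H₁I s * U s t₀) i j)) s := by
    intro s
    have := L.hasFDerivAt.comp_hasDerivAt s (hd s)
    simp only [Function.comp_def, hLapp] at this
    convert this using 1 <;> first | rfl | exact (by simp [Matrix.smul_apply] :
      -(Complex.I * (H₁I s * U s t₀) i j) = ((-Complex.I) • (H₁I s * U s t₀)) i j)
  -- continuity & integrability of the integrand
  have hcont : Continuous fun s : ℝ => (H₁I s * U s t₀) i j := by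
    have h1 : Continuous fun s : ℝ => H₁I s * U s t₀ := by
      have e1 : (fun s : ℝ => H₁I s * U s t₀) =
          fun s : ℝ => (exp ((s:ℂ) • A) * H₁ * exp ((s:ℂ) • (-A))) *
            (exp ((s:ℂ) • A) * exp ((s:ℂ) • B) * K) :=
        funext fun s => by rw [keyH, key]
      rw [e1]
      exact (((expCont A).mul continuous_const).mul (expCont (-A))).mul
        (((expCont A).mul (expCont B)).mul continuous_const)
    have := L.continuous.comp h1
    simpa [Function.comp_def, hLapp] using this
  have hint : IntervalIntegrable
      (fun s : ℝ => -(Complex.I * (H₁I s * U s t₀) i j)) MeasureTheory.volume t₀ t :=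
    ((continuous_const.mul hcont).neg).intervalIntegrable t₀ t
  -- FTC
  have hFTC := intervalIntegral.integral_eq_sub_of_hasDerivAt
    (fun s _ => hdij s) hint
  have hIntEq : ∫ s in t₀..t, -(Complex.I * (H₁I s * U s t₀) i j) =
      -(Complex.I * ∫ s in t₀..t, (H₁I s * U s t₀) i j) := by
    rw [intervalIntegral.integral_neg, intervalIntegral.integral_const_mul]
  -- U t₀ t₀ = 1
  have hU1 : U t₀ t₀ = 1 := by
    rw [hU]
    have h0 : (-(Complex.I * ((t₀:ℂ) - (t₀:ℂ)))) • H = 0 := by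
      rw [sub_self, mul_zero, neg_zero, zero_smul]
    rw [h0, exp_zero, mul_one,
      show (-(Complex.I * (t₀:ℂ))) • H₀ = -((Complex.I * (t₀:ℂ)) • H₀) from neg_smul _ _,
      ← Matrix.exp_add_of_commute _ _ (Commute.refl ((Complex.I * (t₀:ℂ)) • H₀)).neg_right, add_neg_cancel, exp_zero]
  rw [hIntEq, hU1] at hFTC
  linear_combination -hFTC
end

section
/- Let n be a positive integer, let H₀ and H be n×n complex matrices, set H₁ = H − H₀, H₁ᴵ(s) = exp(isH₀) · H₁ · exp(−isH₀), and Uᴵ(t, t₀) = exp(itH₀) · exp(−i(t−t₀)H) · exp(−it₀H₀). Fix t₀ ∈ ℝ and define the Dyson iterates K₀(t) = 1 and K_{m+1}(t) = −i ∫_{t₀}^{t} H₁ᴵ(s) · K_m(s) ds for m ≥ 0. Then for every real t, the series Σ_{m=0}^{∞} K_m(t) converges (absolutely, in any matrix norm) and its sum equals Uᴵ(t, t₀). -/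
open NormedSpace Matrix

section DysonAux

attribute [local instance] Matrix.linftyOpNormedRing Matrix.linftyOpNormedAlgebra

lemma dysonAux1 {n : ℕ} (A : Matrix (Fin n) (Fin n) ℂ) (s : ℝ) :
    Filter.Tendsto (slope (fun u : ℝ => exp (u • A)) s) (nhdsWithin s {s}ᶜ)
      (nhds (exp (s • A) * A)) := by
  have h := hasDerivAt_exp_smul_const (𝕂 := ℝ) A s
  exact hasDerivAt_iff_tendsto_slope.mp h

lemma dysonAux2 {n : ℕ} (H₀ H H₁ : Matrix (Fin n) (Fin n) ℂ) (hH₁ : H₁ = H - H₀) (t₀ s : ℝ) :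
    Filter.Tendsto
      (slope (fun u : ℝ => exp (u • (Complex.I • H₀)) *
        (exp ((u - t₀) • ((-Complex.I) • H)) * exp ((-t₀) • (Complex.I • H₀)))) s)
      (nhdsWithin s {s}ᶜ)
      (nhds ((-Complex.I) •
        ((exp (s • (Complex.I • H₀)) * H₁ * exp ((-s) • (Complex.I • H₀))) *
         (exp (s • (Complex.I • H₀)) *
          (exp ((s - t₀) • ((-Complex.I) • H)) * exp ((-t₀) • (Complex.I • H₀))))))) := by
  set A := Complex.I • H₀ with hA
  set B := (-Complex.I) • H with hB
  set C := exp ((-t₀) • A) with hC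
  have hderiv : ∀ (X : Matrix (Fin n) (Fin n) ℂ) (u : ℝ),
      HasDerivAt (fun v : ℝ => exp (v • X)) (exp (u • X) * X) u := by
    intro X u
    have h := hasDerivAt_exp_smul_const (𝕂 := ℝ) X u
    exact h
  have h2 : HasDerivAt (fun u : ℝ => exp ((u - t₀) • B))
      (exp ((s - t₀) • B) * B) s := by
    have := (hderiv B (s - t₀)).scomp s ((hasDerivAt_id s).sub_const t₀)
    rw [one_smul] at this
    exact this
  have h3 := h2.mul_const C
  have h4 := (hderiv A s).mul h3
  have hinv : exp ((-s) • A) * exp (s • A) = 1 := by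
    rw [← Matrix.exp_add_of_commute _ _ (((Commute.refl A).smul_left (-s)).smul_right s)]
    simp
  have key : ∀ X, exp ((-s) • A) * (exp (s • A) * X) = X := fun X => by
    rw [← mul_assoc, hinv, one_mul]
  have hcB : exp ((s - t₀) • B) * B = B * exp ((s - t₀) • B) :=
    (((Commute.refl B).smul_left (s - t₀)).exp_left).eq
  have hAB : A + B = (-Complex.I) • H₁ := by
    rw [hH₁, hA, hB, smul_sub]; module
  have heq : exp (s • A) * A * (exp ((s - t₀) • B) * C) +
      exp (s • A) * (exp ((s - t₀) • B) * B * C) =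
      (-Complex.I) • ((exp (s • A) * H₁ * exp ((-s) • A)) *
        (exp (s • A) * (exp ((s - t₀) • B) * C))) := by
    calc exp (s • A) * A * (exp ((s - t₀) • B) * C) +
        exp (s • A) * (exp ((s - t₀) • B) * B * C)
        = exp (s • A) * ((A + B) * (exp ((s - t₀) • B) * C)) := by
          rw [hcB]; noncomm_ring
      _ = (-Complex.I) • (exp (s • A) * (H₁ * (exp ((s - t₀) • B) * C))) := by
          rw [hAB]; rw [smul_mul_assoc, mul_smul_comm]
      _ = (-Complex.I) • ((exp (s • A) * H₁ * exp ((-s) • A)) *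
            (exp (s • A) * (exp ((s - t₀) • B) * C))) := by
          rw [mul_assoc (exp (s • A) * H₁), key, mul_assoc]
  rw [heq] at h4
  exact hasDerivAt_iff_tendsto_slope.mp h4

end DysonAux

lemma dysonAbsIntegral (a b : ℝ) (k : ℕ) :
    |∫ u in a..b, |u - a| ^ k| = |b - a| ^ (k + 1) / (k + 1) := by
  have hk : (0:ℝ) < (k:ℝ) + 1 := by positivity
  have h0 : (∫ u in a..b, |u - a| ^ k) = ∫ u in (0:ℝ)..(b - a), |u| ^ k := by
    have := intervalIntegral.integral_comp_sub_right (a := a) (b := b) (fun u => |u| ^ k) a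
    simpa using this
  rw [h0]
  rcases le_or_gt 0 (b - a) with hc | hc
  · have hcong : (∫ u in (0:ℝ)..(b - a), |u| ^ k) = ∫ u in (0:ℝ)..(b - a), u ^ k := by
      refine intervalIntegral.integral_congr fun u hu => ?_
      rw [Set.uIcc_of_le hc] at hu
      rw [abs_of_nonneg hu.1]
    rw [hcong, integral_pow, abs_of_nonneg hc, zero_pow (Nat.succ_ne_zero k), sub_zero]
    rw [abs_div, abs_of_nonneg (by positivity : (0:ℝ) ≤ (b-a)^(k+1)), abs_of_pos hk]
  · have hcong : (∫ u in (b - a)..(0:ℝ), |u| ^ k) = ∫ u in (b - a)..(0:ℝ), (-u) ^ k := by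
      refine intervalIntegral.integral_congr fun u hu => ?_
      rw [Set.uIcc_of_le hc.le] at hu
      rw [abs_of_nonpos hu.2]
    have hneg : (∫ u in (b - a)..(0:ℝ), (-u) ^ k) = ∫ u in (0:ℝ)..(a - b), u ^ k := by
      have := intervalIntegral.integral_comp_neg (a := b - a) (b := (0:ℝ)) (fun u => u ^ k)
      simpa [neg_sub] using this
    have hsymm : (∫ u in (0:ℝ)..(b - a), |u| ^ k) = -∫ u in (b - a)..(0:ℝ), |u| ^ k :=
      (intervalIntegral.integral_symm _ _)
    rw [hsymm, hcong, hneg, integral_pow, zero_pow (Nat.succ_ne_zero k), sub_zero,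
      abs_neg, abs_of_nonpos hc.le]
    rw [abs_div, abs_of_nonneg (pow_nonneg (by linarith) _), abs_of_pos hk]
    rw [neg_sub]

attribute [local instance] Matrix.normedAddCommGroup Matrix.normedSpace

noncomputable instance dysonENormedAddMonoid {n : ℕ} : ENormedAddMonoid (Matrix (Fin n) (Fin n) ℂ) :=
  NormedAddGroup.toENormedAddMonoid

lemma dysonNormMul {n : ℕ} (A B : Matrix (Fin n) (Fin n) ℂ) :
    ‖A * B‖ ≤ n * ‖A‖ * ‖B‖ := by
  have h : ∀ i j, ‖(A * B) i j‖ ≤ n * ‖A‖ * ‖B‖ := by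
    intro i j
    rw [Matrix.mul_apply]
    calc ‖∑ k, A i k * B k j‖ ≤ ∑ k : Fin n, ‖A i k * B k j‖ := norm_sum_le _ _
      _ ≤ ∑ _k : Fin n, ‖A‖ * ‖B‖ := by
          refine Finset.sum_le_sum fun k _ => ?_
          rw [norm_mul]
          exact mul_le_mul (A.norm_entry_le_entrywise_sup_norm)
            (B.norm_entry_le_entrywise_sup_norm) (norm_nonneg _) (norm_nonneg _)
      _ = n * ‖A‖ * ‖B‖ := by simp [Finset.sum_const, mul_assoc]
  refine (Matrix.norm_le_iff ?_).mpr h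
  positivity

/-- The Dyson iterates `K₀(t) = 1`,
`K_{m+1}(t) = -i ∫_{t₀}^{t} H₁ᴵ(s) K_m(s) ds` form an absolutely convergent series whose sum
is the interaction-picture propagator `Uᴵ(t,t₀)`. -/
theorem dyson_series_converges_to_propagator (n : ℕ) (hn : 0 < n)
    (H₀ H H₁ : Matrix (Fin n) (Fin n) ℂ) (hH₁ : H₁ = H - H₀)
    (H₁I : ℝ → Matrix (Fin n) (Fin n) ℂ)
    (hH₁I : ∀ s : ℝ, H₁I s =
      NormedSpace.exp ((Complex.I * (s : ℂ)) • H₀) * H₁ * NormedSpace.exp ((-(Complex.I * (s : ℂ))) • H₀))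
    (U : ℝ → ℝ → Matrix (Fin n) (Fin n) ℂ)
    (hU : ∀ t t₀ : ℝ, U t t₀ =
      NormedSpace.exp ((Complex.I * (t : ℂ)) • H₀) *
        NormedSpace.exp ((-(Complex.I * ((t : ℂ) - (t₀ : ℂ)))) • H) *
        NormedSpace.exp ((-(Complex.I * (t₀ : ℂ))) • H₀))
    (t₀ : ℝ)
    (K : ℕ → ℝ → Matrix (Fin n) (Fin n) ℂ)
    (hK0 : ∀ t : ℝ, K 0 t = 1)
    (hKsucc : ∀ (m : ℕ) (t : ℝ),
      K (m + 1) t = (-Complex.I) • ∫ s in t₀..t, H₁I s * K m s)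
    (t : ℝ) :
    (Summable fun m : ℕ => ‖K m t‖) ∧ HasSum (fun m : ℕ => K m t) (U t t₀) := by
  classical
  set A := Complex.I • H₀ with hAdef
  set B := (-Complex.I) • H with hBdef
  set f : ℝ → Matrix (Fin n) (Fin n) ℂ := fun u => exp (u • A) with hfdef
  set g : ℝ → Matrix (Fin n) (Fin n) ℂ := fun u => exp (u • B) with hgdef
  set V : ℝ → Matrix (Fin n) (Fin n) ℂ := fun u => f u * (g (u - t₀) * f (-t₀)) with hVdef
  -- scalar-action bookkeeping
  have hsmA : ∀ c : ℝ, (Complex.I * (c : ℂ)) • H₀ = c • A := by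
    intro c
    rw [hAdef, ← smul_assoc, Complex.real_smul, mul_comm]
  have hsmA' : ∀ c : ℝ, (-(Complex.I * (c : ℂ))) • H₀ = (-c) • A := by
    intro c
    rw [hAdef, ← smul_assoc, Complex.real_smul]
    congr 1; push_cast; ring
  have hsmB : ∀ c : ℝ, (-(Complex.I * (c : ℂ))) • H = c • B := by
    intro c
    rw [hBdef, ← smul_assoc, Complex.real_smul]
    congr 1; ring
  have hH₁I' : ∀ s : ℝ, H₁I s = f s * H₁ * f (-s) := by
    intro s
    rw [hH₁I s, hsmA s, hsmA' s]
  have hUV : U t t₀ = V t := by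
    rw [hU t t₀,
      show ((t : ℂ) - (t₀ : ℂ)) = ((t - t₀ : ℝ) : ℂ) by push_cast; ring,
      hsmA t, hsmB (t - t₀), hsmA' t₀, mul_assoc]
  -- derivatives
  have hfD : ∀ s : ℝ, HasDerivAt f (f s * A) s := fun s =>
    hasDerivAt_iff_tendsto_slope.mpr (dysonAux1 A s)
  have hVD : ∀ s : ℝ, HasDerivAt V ((-Complex.I) • (H₁I s * V s)) s := by
    intro s
    have h := hasDerivAt_iff_tendsto_slope.mpr (dysonAux2 H₀ H H₁ hH₁ t₀ s)
    rw [hH₁I' s]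
    exact h
  -- continuity
  have hfC : Continuous f := continuous_iff_continuousAt.mpr fun s => (hfD s).continuousAt
  have hVC : Continuous V := continuous_iff_continuousAt.mpr fun s => (hVD s).continuousAt
  have hH₁IC : Continuous H₁I := by
    have h : Continuous fun s : ℝ => f s * H₁ * f (-s) :=
      (hfC.matrix_mul continuous_const).matrix_mul (hfC.comp continuous_neg)
    exact h.congr fun s => (hH₁I' s).symm
  have hKC : ∀ m, Continuous (K m) := by
    intro m
    induction m with
    | zero => exact continuous_const.congr fun s => (hK0 s).symm
    | succ m ih =>
      have hint : Continuous fun u => H₁I u * K m u := hH₁IC.matrix_mul ih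
      have h : Continuous fun s => ∫ u in t₀..s, H₁I u * K m u :=
        intervalIntegral.continuous_primitive (fun a b => hint.intervalIntegrable a b) t₀
      exact (h.const_smul (-Complex.I)).congr fun s => (hKsucc m s).symm
  -- bounds on the interval
  obtain ⟨M, hM⟩ := isCompact_uIcc.exists_bound_of_continuousOn
    (s := Set.uIcc t₀ t) hH₁IC.continuousOn
  have hM0 : 0 ≤ M := le_trans (norm_nonneg _) (hM t₀ Set.left_mem_uIcc)
  obtain ⟨Cv, hCv⟩ := isCompact_uIcc.exists_bound_of_continuousOn
    (s := Set.uIcc t₀ t) hVC.continuousOn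
  have hCv0 : 0 ≤ Cv := le_trans (norm_nonneg _) (hCv t₀ Set.left_mem_uIcc)
  set R := (n : ℝ) * M with hRdef
  have hR0 : 0 ≤ R := by positivity
  -- the key iteration step
  have hstep : ∀ (W : ℝ → Matrix (Fin n) (Fin n) ℂ) (c : ℝ) (m : ℕ), Continuous W → 0 ≤ c →
      (∀ u ∈ Set.uIcc t₀ t, ‖W u‖ ≤ c * (R ^ m * |u - t₀| ^ m / m.factorial)) →
      ∀ s ∈ Set.uIcc t₀ t, ‖∫ u in t₀..s, H₁I u * W u‖ ≤
        c * (R ^ (m + 1) * |s - t₀| ^ (m + 1) / (m + 1).factorial) := by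
    intro W c m hWC hc hW s hs
    have hsub : Set.uIoc t₀ s ⊆ Set.uIcc t₀ t :=
      Set.uIoc_subset_uIcc.trans (Set.uIcc_subset_uIcc Set.left_mem_uIcc hs)
    have hfac : (0 : ℝ) < m.factorial := by exact_mod_cast m.factorial_pos
    have hbound : ∀ᵐ u ∂(MeasureTheory.volume.restrict (Set.uIoc t₀ s)),
        ‖H₁I u * W u‖ ≤ (R * (c * (R ^ m / m.factorial))) * |u - t₀| ^ m := by
      refine MeasureTheory.ae_restrict_of_forall_mem measurableSet_uIoc fun u hu => ?_
      have hu' := hsub hu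
      calc ‖H₁I u * W u‖ ≤ n * ‖H₁I u‖ * ‖W u‖ := dysonNormMul _ _
        _ ≤ ((n : ℝ) * M) * (c * (R ^ m * |u - t₀| ^ m / m.factorial)) := by
            refine mul_le_mul ?_ (hW u hu') (norm_nonneg _) (by positivity)
            exact mul_le_mul_of_nonneg_left (hM u hu') (Nat.cast_nonneg n)
        _ = (R * (c * (R ^ m / m.factorial))) * |u - t₀| ^ m := by
            rw [hRdef]; ring
    have hgint : IntervalIntegrable
        (fun u => (R * (c * (R ^ m / m.factorial))) * |u - t₀| ^ m)
        MeasureTheory.volume t₀ s := by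
      apply Continuous.intervalIntegrable
      exact continuous_const.mul (((continuous_id.sub continuous_const).abs).pow m)
    calc ‖∫ u in t₀..s, H₁I u * W u‖
        ≤ |∫ u in t₀..s, (R * (c * (R ^ m / m.factorial))) * |u - t₀| ^ m| :=
          intervalIntegral.norm_integral_le_abs_of_norm_le hbound hgint
      _ = (R * (c * (R ^ m / m.factorial))) * |∫ u in t₀..s, |u - t₀| ^ m| := by
          rw [intervalIntegral.integral_const_mul, abs_mul,
            abs_of_nonneg (by positivity : (0:ℝ) ≤ R * (c * (R ^ m / m.factorial)))]
      _ = (R * (c * (R ^ m / m.factorial))) * (|s - t₀| ^ (m + 1) / (m + 1)) := by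
          rw [dysonAbsIntegral]
      _ = c * (R ^ (m + 1) * |s - t₀| ^ (m + 1) / (m + 1).factorial) := by
          rw [Nat.factorial_succ]
          push_cast
          field_simp
          ring
  -- bound on the iterates
  have hKb : ∀ m, ∀ s ∈ Set.uIcc t₀ t, ‖K m s‖ ≤
      ‖(1 : Matrix (Fin n) (Fin n) ℂ)‖ * (R ^ m * |s - t₀| ^ m / m.factorial) := by
    intro m
    induction m with
    | zero => intro s _; simp [hK0 s]
    | succ m ih =>
      intro s hs
      rw [hKsucc m s, norm_smul, norm_neg, Complex.norm_I, one_mul]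
      exact hstep (K m) _ m (hKC m) (norm_nonneg _) ih s hs
  -- the integral equation for V
  have hmul1 : ∀ a b : ℝ, f a * f b = f (a + b) := by
    intro a b
    rw [hfdef]
    simp only
    rw [show (a + b) • A = a • A + b • A from add_smul a b A]
    exact (Matrix.exp_add_of_commute _ _ (((Commute.refl A).smul_left a).smul_right b)).symm
  have hfinv : ∀ a : ℝ, f a * f (-a) = 1 := by
    intro a
    rw [hmul1, add_neg_cancel, hfdef]
    simp only
    rw [zero_smul, exp_zero]
  have hVt₀ : V t₀ = 1 := by
    rw [hVdef]
    simp only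
    rw [sub_self, hgdef]
    simp only
    rw [zero_smul, exp_zero, one_mul, hfinv]
  have hVint : ∀ s : ℝ, V s = 1 + (-Complex.I) • ∫ u in t₀..s, H₁I u * V u := by
    intro s
    have hd : ∀ u ∈ Set.uIcc t₀ s, HasDerivAt V ((-Complex.I) • (H₁I u * V u)) u :=
      fun u _ => hVD u
    have hi : IntervalIntegrable (fun u => (-Complex.I) • (H₁I u * V u))
        MeasureTheory.volume t₀ s :=
      ((hH₁IC.matrix_mul hVC).const_smul (-Complex.I)).intervalIntegrable _ _
    have h := intervalIntegral.integral_eq_sub_of_hasDerivAt hd hi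
    rw [intervalIntegral.integral_smul, hVt₀] at h
    rw [h]
    abel
  -- error recursion
  have hPS : ∀ (m : ℕ) (s : ℝ), V s - ∑ k ∈ Finset.range (m + 1), K k s =
      (-Complex.I) • ∫ u in t₀..s, H₁I u * (V u - ∑ k ∈ Finset.range m, K k u) := by
    intro m s
    have hintKi : ∀ i ∈ Finset.range m, IntervalIntegrable (fun u => H₁I u * K i u)
        MeasureTheory.volume t₀ s :=
      fun i _ => (hH₁IC.matrix_mul (hKC i)).intervalIntegrable _ _
    have h1 : ∑ k ∈ Finset.range (m + 1), K k s
        = 1 + (-Complex.I) • ∫ u in t₀..s, H₁I u * (∑ k ∈ Finset.range m, K k u) := by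
      rw [Finset.sum_range_succ', hK0]
      have h2 : ∀ i ∈ Finset.range m, K (i + 1) s =
          (-Complex.I) • ∫ u in t₀..s, H₁I u * K i u := fun i _ => hKsucc i s
      rw [Finset.sum_congr rfl h2, ← Finset.smul_sum,
        ← intervalIntegral.integral_finset_sum hintKi]
      have h3 : ∀ u : ℝ, (∑ i ∈ Finset.range m, H₁I u * K i u)
          = H₁I u * (∑ k ∈ Finset.range m, K k u) := fun u => (Finset.mul_sum _ _ _).symm
      rw [intervalIntegral.integral_congr fun u _ => h3 u]
      abel
    rw [h1, hVint s]
    have hiV : IntervalIntegrable (fun u => H₁I u * V u) MeasureTheory.volume t₀ s :=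
      (hH₁IC.matrix_mul hVC).intervalIntegrable _ _
    have hiS : IntervalIntegrable (fun u => H₁I u * (∑ k ∈ Finset.range m, K k u))
        MeasureTheory.volume t₀ s :=
      (hH₁IC.matrix_mul (continuous_finset_sum _ fun i _ => hKC i)).intervalIntegrable _ _
    rw [show (1 + (-Complex.I) • ∫ u in t₀..s, H₁I u * V u) -
        (1 + (-Complex.I) • ∫ u in t₀..s, H₁I u * (∑ k ∈ Finset.range m, K k u)) =
        (-Complex.I) • ((∫ u in t₀..s, H₁I u * V u) -
          ∫ u in t₀..s, H₁I u * (∑ k ∈ Finset.range m, K k u)) by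
      rw [smul_sub]; abel]
    rw [← intervalIntegral.integral_sub hiV hiS]
    congr 1
    refine intervalIntegral.integral_congr fun u _ => ?_
    rw [mul_sub]
  -- error bound
  have hVb : ∀ m, ∀ s ∈ Set.uIcc t₀ t, ‖V s - ∑ k ∈ Finset.range m, K k s‖ ≤
      Cv * (R ^ m * |s - t₀| ^ m / m.factorial) := by
    intro m
    induction m with
    | zero => intro s hs; simpa using hCv s hs
    | succ m ih =>
      intro s hs
      rw [hPS m s, norm_smul, norm_neg, Complex.norm_I, one_mul]
      exact hstep _ Cv m (hVC.sub (continuous_finset_sum _ fun i _ => hKC i)) hCv0 ih s hs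
  -- conclusion
  have hfact : ∀ m : ℕ, R ^ m * |t - t₀| ^ m / m.factorial
      = (R * |t - t₀|) ^ m / m.factorial := by
    intro m; ring
  have hsum1 : Summable fun m : ℕ => ‖K m t‖ := by
    refine Summable.of_nonneg_of_le (fun m => norm_nonneg _) (fun m => ?_)
      ((Real.summable_pow_div_factorial (R * |t - t₀|)).mul_left
        ‖(1 : Matrix (Fin n) (Fin n) ℂ)‖)
    have h := hKb m t Set.right_mem_uIcc
    rwa [hfact] at h
  have hsum2 : Summable fun m : ℕ => K m t := hsum1.of_norm
  obtain ⟨S, hS⟩ := hsum2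
  have htend1 := hS.tendsto_sum_nat
  have htend0 : Filter.Tendsto (fun m : ℕ => Cv * ((R * |t - t₀|) ^ m / m.factorial))
      Filter.atTop (nhds 0) := by
    have h := (FloorSemiring.tendsto_pow_div_factorial_atTop (R * |t - t₀|)).const_mul Cv
    simpa using h
  have htend2 : Filter.Tendsto (fun m : ℕ => ∑ k ∈ Finset.range m, K k t)
      Filter.atTop (nhds (V t)) := by
    refine tendsto_iff_norm_sub_tendsto_zero.mpr ?_
    refine squeeze_zero (fun m => norm_nonneg _) (fun m => ?_) htend0
    rw [norm_sub_rev]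
    have h := hVb m t Set.right_mem_uIcc
    rwa [hfact] at h
  have hSV : S = V t := tendsto_nhds_unique htend1 htend2
  refine ⟨hsum1, ?_⟩
  rw [hUV]
  rwa [hSV] at hS
end

section
/- Let n be a positive integer and let F : ℝ → M be a continuous function into the n×n complex matrices. Then for all real numbers t₀ ≤ t, the iterated integral over the ordered simplex equals half the time-ordered double integral over the square: ∫_{t₀}^{t} ( ∫_{t₀}^{t₁} F(t₁) · F(t₂) dt₂ ) dt₁ = (1/2) ∫_{t₀}^{t} ∫_{t₀}^{t} T[F(t₁)F(t₂)] dt₂ dt₁, where T[F(t₁)F(t₂)] = F(t₁)·F(t₂) if t₂ ≤ t₁ and F(t₂)·F(t₁) otherwise. -/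
open Matrix

attribute [local instance] Matrix.normedAddCommGroup Matrix.normedSpace

open MeasureTheory Set Function intervalIntegral in
/-- Swapping the order of integration over the triangle `a ≤ y ≤ x ≤ b`. -/
lemma triangle_swap_aux {E : Type*} [NormedAddCommGroup E] [NormedSpace ℝ E] [CompleteSpace E]
    (f : ℝ → ℝ → E) (hf : Continuous (uncurry f)) {a b : ℝ} (hab : a ≤ b) :
    (∫ x in a..b, ∫ y in a..x, f x y) = ∫ y in a..b, ∫ x in y..b, f x y := by
  set μ := volume.restrict (Ioc a b) with hμ
  haveI : IsFiniteMeasure μ := by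
    constructor
    rw [hμ, Measure.restrict_apply MeasurableSet.univ, Set.univ_inter, Real.volume_Ioc]
    exact ENNReal.ofReal_lt_top
  set g : ℝ → ℝ → E := fun x y => if y < x then f x y else 0 with hg
  have hgind : uncurry g = Set.indicator {p : ℝ × ℝ | p.2 < p.1} (uncurry f) := by
    ext p
    by_cases h : p.2 < p.1 <;> simp [uncurry, hg, h, Set.indicator]
  have hgmeas : AEStronglyMeasurable (uncurry g) (μ.prod μ) := by
    rw [hgind]
    exact (hf.stronglyMeasurable.indicator
      (isOpen_lt continuous_snd continuous_fst).measurableSet).aestronglyMeasurable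
  obtain ⟨C, hC⟩ := ((isCompact_Icc (a := a) (b := b)).prod (isCompact_Icc (a := a)
    (b := b))).exists_bound_of_continuousOn hf.continuousOn
  have hprod : μ.prod μ = (volume.prod volume).restrict (Ioc a b ×ˢ Ioc a b) :=
    Measure.prod_restrict _ _
  have hmem : ∀ᵐ p ∂(μ.prod μ), p ∈ Ioc a b ×ˢ Ioc a b := by
    rw [hprod]
    exact ae_restrict_mem (measurableSet_Ioc.prod measurableSet_Ioc)
  have hint : Integrable (uncurry g) (μ.prod μ) := by
    refine Integrable.mono' (integrable_const (max C 0)) hgmeas ?_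
    filter_upwards [hmem] with p hp
    have hp1 : p.1 ∈ Icc a b := Ioc_subset_Icc_self hp.1
    have hp2 : p.2 ∈ Icc a b := Ioc_subset_Icc_self hp.2
    by_cases h : p.2 < p.1
    · have := hC p ⟨hp1, hp2⟩
      simp only [uncurry, hg, if_pos h]
      exact le_trans this (le_max_left _ _)
    · simp only [uncurry, hg, if_neg h, norm_zero]
      exact le_max_right _ _
  have hswap := MeasureTheory.integral_integral_swap hint
  -- identify LHS
  have hL : (∫ x, ∫ y, g x y ∂μ ∂μ) = ∫ x in a..b, ∫ y in a..x, f x y := by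
    rw [intervalIntegral.integral_of_le hab, hμ]
    refine setIntegral_congr_fun measurableSet_Ioc ?_
    intro x hx
    have h1 : g x = (Iio x).indicator (f x) := by
      funext y
      by_cases h : y < x <;> simp [hg, h, Set.indicator, Set.mem_Iio]
    show (∫ (y : ℝ) in Ioc a b, g x y) = ∫ (y : ℝ) in a..x, f x y
    rw [h1, setIntegral_indicator measurableSet_Iio]
    have h2 : Ioc a b ∩ Iio x = Ioo a x := by
      ext z
      simp only [mem_inter_iff, mem_Ioc, mem_Iio, mem_Ioo]
      constructor
      · rintro ⟨⟨h1, h2⟩, h3⟩; exact ⟨h1, h3⟩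
      · rintro ⟨h1, h3⟩; exact ⟨⟨h1, le_trans h3.le hx.2⟩, h3⟩
    rw [h2, intervalIntegral.integral_of_le hx.1.le, integral_Ioc_eq_integral_Ioo]
  -- identify RHS
  have hR : (∫ y, ∫ x, g x y ∂μ ∂μ) = ∫ y in a..b, ∫ x in y..b, f x y := by
    rw [intervalIntegral.integral_of_le hab, hμ]
    refine setIntegral_congr_fun measurableSet_Ioc ?_
    intro y hy
    have h1 : (fun x => g x y) = (Ioi y).indicator (fun x => f x y) := by
      funext x
      by_cases h : y < x <;> simp [hg, h, Set.indicator, Set.mem_Ioi]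
    show (∫ (x : ℝ) in Ioc a b, g x y) = ∫ (x : ℝ) in y..b, f x y
    rw [h1, setIntegral_indicator measurableSet_Ioi]
    have h2 : Ioc a b ∩ Ioi y = Ioc y b := by
      rw [Set.Ioc_inter_Ioi, max_eq_right hy.1.le]
    rw [h2, intervalIntegral.integral_of_le hy.2]
  rw [← hL, ← hR, hswap]

open MeasureTheory Set Function intervalIntegral in
/-- For a continuous matrix-valued `F` and `t₀ ≤ t`, the iterated integral
over the ordered simplex equals half the time-ordered double integral over the square. -/
theorem time_ordered_double_integral (n : ℕ) (hn : 0 < n)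
    (F : ℝ → Matrix (Fin n) (Fin n) ℂ) (hF : Continuous F)
    (t₀ t : ℝ) (hle : t₀ ≤ t) :
    (∫ t₁ in t₀..t, ∫ t₂ in t₀..t₁, F t₁ * F t₂) =
      (1 / 2 : ℝ) • ∫ t₁ in t₀..t, ∫ t₂ in t₀..t,
        (if t₂ ≤ t₁ then F t₁ * F t₂ else F t₂ * F t₁) := by
  have hmul : Continuous fun p : ℝ × ℝ => F p.1 * F p.2 :=
    Continuous.matrix_mul hF.fst' hF.snd'
  have hmul' : Continuous fun p : ℝ × ℝ => F p.2 * F p.1 :=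
    Continuous.matrix_mul hF.snd' hF.fst'
  set G : ℝ → ℝ → Matrix (Fin n) (Fin n) ℂ := fun t₁ t₂ => if t₂ ≤ t₁ then F t₁ * F t₂ else F t₂ * F t₁ with hGdef
  have hG : Continuous (uncurry G) := by
    have : (uncurry G) = fun p : ℝ × ℝ =>
        if p.2 ≤ p.1 then F p.1 * F p.2 else F p.2 * F p.1 := rfl
    rw [this]
    exact Continuous.if_le hmul hmul' continuous_snd continuous_fst
      (fun p hp => by rw [hp])
  -- split the inner integral
  have hsplit : EqOn (fun t₁ => ∫ t₂ in t₀..t, G t₁ t₂)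
      (fun t₁ => (∫ t₂ in t₀..t₁, F t₁ * F t₂) + ∫ t₂ in t₁..t, F t₂ * F t₁)
      (Set.uIcc t₀ t) := by
    intro t₁ ht₁
    rw [Set.uIcc_of_le hle] at ht₁
    have hGc : Continuous (G t₁) := hG.comp (Continuous.prodMk_right t₁)
    have hadd : (∫ t₂ in t₀..t₁, G t₁ t₂) + (∫ t₂ in t₁..t, G t₁ t₂)
        = ∫ t₂ in t₀..t, G t₁ t₂ :=
      intervalIntegral.integral_add_adjacent_intervals
        (hGc.intervalIntegrable _ _) (hGc.intervalIntegrable _ _)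
    have h1 : (∫ t₂ in t₀..t₁, G t₁ t₂) = ∫ t₂ in t₀..t₁, F t₁ * F t₂ := by
      refine intervalIntegral.integral_congr fun t₂ ht₂ => ?_
      rw [Set.uIcc_of_le ht₁.1] at ht₂
      simp [hGdef, ht₂.2]
    have h2 : (∫ t₂ in t₁..t, G t₁ t₂) = ∫ t₂ in t₁..t, F t₂ * F t₁ := by
      refine intervalIntegral.integral_congr fun t₂ ht₂ => ?_
      rw [Set.uIcc_of_le ht₁.2] at ht₂
      by_cases h : t₂ ≤ t₁
      · have heq : t₂ = t₁ := le_antisymm h ht₂.1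
        simp [hGdef, h, heq]
      · simp [hGdef, h]
    simp only
    rw [← hadd, h1, h2]
  have hS : (∫ t₁ in t₀..t, ∫ t₂ in t₀..t, G t₁ t₂)
      = (∫ t₁ in t₀..t, ∫ t₂ in t₀..t₁, F t₁ * F t₂)
        + ∫ t₁ in t₀..t, ∫ t₂ in t₁..t, F t₂ * F t₁ := by
    rw [intervalIntegral.integral_congr hsplit]
    refine intervalIntegral.integral_add ?_ ?_
    · have : Continuous fun x : ℝ => ∫ t₂ in t₀..x, F x * F t₂ := by
        apply intervalIntegral.continuous_parametric_intervalIntegral_of_continuous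
          (f := fun x t₂ => F x * F t₂) _ continuous_id
        exact hmul
      exact this.intervalIntegrable _ _
    · have hB : (fun x : ℝ => ∫ t₂ in x..t, F t₂ * F x)
          = fun x : ℝ => -∫ t₂ in t..x, F t₂ * F x := by
        funext x
        rw [intervalIntegral.integral_symm]
      have : Continuous fun x : ℝ => ∫ t₂ in t..x, F t₂ * F x := by
        apply intervalIntegral.continuous_parametric_intervalIntegral_of_continuous
          (f := fun x t₂ => F t₂ * F x) _ continuous_id
        exact hmul'
      rw [hB]
      exact this.neg.intervalIntegrable _ _
  have htri := triangle_swap_aux (fun x y => F x * F y) hmul hle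
  -- htri : ∫ x in t₀..t, ∫ y in t₀..x, F x * F y = ∫ y in t₀..t, ∫ x in y..t, F x * F y
  rw [hS, ← htri, smul_add, ← add_smul]
  norm_num
end

section
/- Let η > 0 and let ε : ℕ → ℝ. Define complex-valued functions Iₘ : ℝ → ℂ by I₀(t) = 1 and I_{m+1}(t) = ∫_{−∞}^{t} e^{(η + i ε(m+1)) s} · I_m(s) ds. Then for every natural number m and every real t, the defining integral converges and I_m(t) = e^{(mη + i Σ_{j=1}^{m} ε(j)) t} · ∏_{k=1}^{m} (kη + i Σ_{j=1}^{k} ε(j))⁻¹. In particular, I_m(0) = ∏_{k=1}^{m} (kη + i Σ_{j=1}^{k} ε(j))⁻¹. -/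
open MeasureTheory Set Filter Topology

noncomputable def nestC (η : ℝ) (ε : ℕ → ℝ) (m : ℕ) : ℂ :=
  ((m * η : ℝ) : ℂ) + Complex.I * ((∑ j ∈ Finset.Icc 1 m, ε j : ℝ) : ℂ)

noncomputable def nestP (η : ℝ) (ε : ℕ → ℝ) (m : ℕ) : ℂ :=
  ∏ k ∈ Finset.Icc 1 m, (nestC η ε k)⁻¹

lemma cexp_key (c : ℂ) (hc : 0 < c.re) (t : ℝ) :
    IntegrableOn (fun s : ℝ => Complex.exp (c * s)) (Set.Iic t) ∧
    ∫ s in Set.Iic t, Complex.exp (c * s) = Complex.exp (c * t) / c := by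
  have hc0 : c ≠ 0 := fun h => by simp [h] at hc
  -- derivative of the complex antiderivative
  have hD : ∀ x : ℝ, HasDerivAt (fun s : ℝ => Complex.exp (c * s) / c)
      (Complex.exp (c * x)) x := by
    intro x
    have h1 : HasDerivAt (fun z : ℂ => Complex.exp (c * z) / c) (Complex.exp (c * x)) (x : ℂ) := by
      have h2 : HasDerivAt (fun z : ℂ => Complex.exp (c * z)) (Complex.exp (c * x) * c) (x : ℂ) := by
        have := (Complex.hasDerivAt_exp (c * x)).comp (x : ℂ)
          ((hasDerivAt_id (x : ℂ)).const_mul c)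
        simpa [mul_comm, Function.comp_def] using this
      have := h2.div_const c
      simpa [mul_div_assoc, div_self hc0] using this
    exact h1.comp_ofReal
  -- tendsto 0 at -∞
  have htend : Tendsto (fun s : ℝ => Complex.exp (c * s) / c) atBot (𝓝 0) := by
    rw [tendsto_zero_iff_norm_tendsto_zero]
    have h1 : Tendsto (fun s : ℝ => c.re * s) atBot atBot :=
      tendsto_id.const_mul_atBot hc
    have h2 : Tendsto (fun s : ℝ => Real.exp (c.re * s) / ‖c‖) atBot (𝓝 0) := by
      simpa using (Real.tendsto_exp_atBot.comp h1).div_const ‖c‖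
    refine h2.congr fun s => ?_
    simp [Complex.norm_exp, Complex.mul_re]
  -- integrability
  have hint : IntegrableOn (fun s : ℝ => Complex.exp (c * s)) (Set.Iic t) := by
    apply integrableOn_Iic_of_intervalIntegral_norm_bounded
      (Real.exp (c.re * t) / c.re) t
      (fun i : ℝ => ((Complex.continuous_exp.comp (continuous_const.mul Complex.continuous_ofReal)).integrableOn_Ioc))
      (tendsto_id : Tendsto (fun i : ℝ => i) atBot atBot)
    filter_upwards [eventually_le_atBot t] with a ha
    have hDr : ∀ x : ℝ, HasDerivAt (fun s : ℝ => Real.exp (c.re * s) / c.re)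
        (Real.exp (c.re * x)) x := by
      intro x
      have h2 : HasDerivAt (fun s : ℝ => Real.exp (c.re * s)) (Real.exp (c.re * x) * c.re) x := by
        have := ((hasDerivAt_id x).const_mul c.re).exp
        simpa [mul_comm] using this
      have := h2.div_const c.re
      simpa [mul_div_assoc, div_self hc.ne'] using this
    have hnorm : ∀ s : ℝ, ‖Complex.exp (c * s)‖ = Real.exp (c.re * s) := by
      intro s; simp [Complex.norm_exp, Complex.mul_re]
    have hcont : IntervalIntegrable (fun s : ℝ => Real.exp (c.re * s)) volume a t :=
      (Real.continuous_exp.comp (continuous_const.mul continuous_id)).intervalIntegrable a t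
    calc ∫ x in a..t, ‖Complex.exp (c * x)‖
        = ∫ x in a..t, Real.exp (c.re * x) := by
          simp only [hnorm]
      _ = Real.exp (c.re * t) / c.re - Real.exp (c.re * a) / c.re :=
          intervalIntegral.integral_eq_sub_of_hasDerivAt (fun x _ => hDr x) hcont
      _ ≤ Real.exp (c.re * t) / c.re := by
          have : 0 < Real.exp (c.re * a) / c.re := div_pos (Real.exp_pos _) hc
          linarith
  refine ⟨hint, ?_⟩
  have := integral_Iic_of_hasDerivAt_of_tendsto' (fun x _ => hD x) hint htend
  simpa using this

theorem nested_aux (η : ℝ) (hη : 0 < η) (ε : ℕ → ℝ)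
    (I : ℕ → ℝ → ℂ)
    (hI0 : ∀ t : ℝ, I 0 t = 1)
    (hIsucc : ∀ (m : ℕ) (t : ℝ), I (m + 1) t =
      ∫ s in Set.Iic t,
        Complex.exp (((η : ℂ) + Complex.I * (ε (m + 1) : ℂ)) * (s : ℂ)) * I m s) :
    ∀ (m : ℕ) (t : ℝ),
      IntegrableOn
          (fun s : ℝ =>
            Complex.exp (((η : ℂ) + Complex.I * (ε (m + 1) : ℂ)) * (s : ℂ)) * I m s)
          (Set.Iic t) ∧
        I m t = Complex.exp (nestC η ε m * t) * nestP η ε m := by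
  have hcre : ∀ m : ℕ, (nestC η ε m).re = m * η := by
    intro m; simp [nestC]
  have hcadd : ∀ m : ℕ,
      ((η : ℂ) + Complex.I * (ε (m + 1) : ℂ)) + nestC η ε m = nestC η ε (m + 1) := by
    intro m
    simp only [nestC, Finset.sum_Icc_succ_top (Nat.one_le_iff_ne_zero.2 (Nat.succ_ne_zero m))]
    push_cast
    ring
  have hfun : ∀ m : ℕ, (∀ s : ℝ, I m s = Complex.exp (nestC η ε m * s) * nestP η ε m) →
      (fun s : ℝ => Complex.exp (((η : ℂ) + Complex.I * (ε (m + 1) : ℂ)) * (s : ℂ)) * I m s)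
      = fun s : ℝ => Complex.exp (nestC η ε (m + 1) * s) * nestP η ε m := by
    intro m hm
    funext s
    rw [hm s, ← hcadd m]
    conv_rhs => rw [add_mul, Complex.exp_add]
    rw [mul_assoc]
  have key : ∀ m : ℕ, (∀ s : ℝ, I m s = Complex.exp (nestC η ε m * s) * nestP η ε m) →
      ∀ t : ℝ,
      IntegrableOn
          (fun s : ℝ =>
            Complex.exp (((η : ℂ) + Complex.I * (ε (m + 1) : ℂ)) * (s : ℂ)) * I m s)
          (Set.Iic t) ∧
        I (m + 1) t = Complex.exp (nestC η ε (m + 1) * t) * nestP η ε (m + 1) := by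
    intro m hm t
    have hre : 0 < (nestC η ε (m + 1)).re := by
      rw [hcre]; positivity
    obtain ⟨hint, hval⟩ := cexp_key (nestC η ε (m + 1)) hre t
    rw [hfun m hm]
    constructor
    · exact hint.mul_const _
    · rw [hIsucc m t, hfun m hm, integral_mul_const, hval]
      simp only [nestP, Finset.prod_Icc_succ_top (Nat.one_le_iff_ne_zero.2 (Nat.succ_ne_zero m))]
      rw [div_eq_mul_inv]
      ring
  intro m
  induction m with
  | zero =>
    intro t
    have h0 : ∀ s : ℝ, I 0 s = Complex.exp (nestC η ε 0 * s) * nestP η ε 0 := by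
      intro s; simp [hI0, nestC, nestP]
    exact ⟨(key 0 h0 t).1, h0 t⟩
  | succ n ih =>
    intro t
    have hn : ∀ s : ℝ, I n s = Complex.exp (nestC η ε n * s) * nestP η ε n :=
      fun s => (ih s).2
    have h1 : ∀ s : ℝ, I (n + 1) s = Complex.exp (nestC η ε (n + 1) * s) * nestP η ε (n + 1) :=
      fun s => (key n hn s).2
    exact ⟨(key (n + 1) h1 t).1, h1 t⟩

/-- The nested adiabatic-switching integrals `I₀(t) = 1`,
`I_{m+1}(t) = ∫_{-∞}^{t} e^{(η + iε(m+1))s} I_m(s) ds` converge and satisfy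
`I_m(t) = e^{(mη + iΣ_{j=1}^m ε(j))t} ∏_{k=1}^{m} (kη + iΣ_{j=1}^k ε(j))⁻¹`; in particular
`I_m(0) = ∏_{k=1}^{m} (kη + iΣ_{j=1}^k ε(j))⁻¹`. -/
theorem nested_adiabatic_integrals (η : ℝ) (hη : 0 < η) (ε : ℕ → ℝ)
    (I : ℕ → ℝ → ℂ)
    (hI0 : ∀ t : ℝ, I 0 t = 1)
    (hIsucc : ∀ (m : ℕ) (t : ℝ), I (m + 1) t =
      ∫ s in Set.Iic t,
        Complex.exp (((η : ℂ) + Complex.I * (ε (m + 1) : ℂ)) * (s : ℂ)) * I m s) :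
    ∀ (m : ℕ) (t : ℝ),
      IntegrableOn
          (fun s : ℝ =>
            Complex.exp (((η : ℂ) + Complex.I * (ε (m + 1) : ℂ)) * (s : ℂ)) * I m s)
          (Set.Iic t) ∧
        I m t = Complex.exp ((((m * η : ℝ) : ℂ) +
              Complex.I * ((∑ j ∈ Finset.Icc 1 m, ε j : ℝ) : ℂ)) * (t : ℂ)) *
            ∏ k ∈ Finset.Icc 1 m,
              (((k * η : ℝ) : ℂ) + Complex.I * ((∑ j ∈ Finset.Icc 1 k, ε j : ℝ) : ℂ))⁻¹ ∧
        I m 0 = ∏ k ∈ Finset.Icc 1 m,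
          (((k * η : ℝ) : ℂ) + Complex.I * ((∑ j ∈ Finset.Icc 1 k, ε j : ℝ) : ℂ))⁻¹ := by
  intro m t
  obtain ⟨h1, h2⟩ := nested_aux η hη ε I hI0 hIsucc m t
  obtain ⟨-, h3⟩ := nested_aux η hη ε I hI0 hIsucc m 0
  refine ⟨h1, ?_, ?_⟩
  · simpa [nestC, nestP] using h2
  · simpa [nestC, nestP] using h3
end

section
/- Let n be a positive integer and let A be an n×n complex matrix satisfying A³ = −A. Then for every real θ, the matrix exponential satisfies exp(θ·A) = 1 + (sin θ)·A + (1 − cos θ)·A². -/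
open NormedSpace Matrix Nat


/-- If `A³ = -A` then `exp(θA) = 1 + (sin θ) A + (1 - cos θ) A²`. -/
theorem exp_of_cube_eq_neg_self (n : ℕ) (hn : 0 < n)
    (A : Matrix (Fin n) (Fin n) ℂ) (hA : A ^ 3 = -A) (θ : ℝ) :
    exp ((θ : ℂ) • A) =
      1 + ((Real.sin θ : ℝ) : ℂ) • A + (((1 - Real.cos θ : ℝ)) : ℂ) • A ^ 2 := by
  have hA3 : A * A ^ 2 = -A := by
    rw [← hA]; simp [pow_succ, mul_assoc]
  -- odd powers
  have hodd : ∀ m : ℕ, A ^ (2 * m + 1) = ((-1 : ℂ)) ^ m • A := by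
    intro m
    induction m with
    | zero => simp
    | succ k ih =>
      have h1 : 2 * (k + 1) + 1 = (2 * k + 1) + 2 := by ring
      rw [h1, pow_add, ih, smul_mul_assoc, hA3, pow_succ (-1 : ℂ) k,
        mul_smul]
      simp
  -- even powers ≥ 2
  have heven : ∀ m : ℕ, A ^ (2 * (m + 1)) = ((-1 : ℂ)) ^ m • A ^ 2 := by
    intro m
    induction m with
    | zero => simp
    | succ k ih =>
      have h2 : A ^ (2 + 2 : ℕ) = -(A ^ 2) := by
        have e : (2 + 2 : ℕ) = 3 + 1 := rfl
        rw [e, pow_succ, hA, neg_mul, ← pow_two]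
      have h1 : 2 * (k + 1 + 1) = 2 * (k + 1) + 2 := by ring
      rw [h1, pow_add, ih, smul_mul_assoc, ← pow_add, h2, pow_succ (-1 : ℂ) k,
        mul_smul]
      simp
  set f : ℕ → Matrix (Fin n) (Fin n) ℂ :=
    fun k => ((k ! : ℂ))⁻¹ • ((θ : ℂ) • A) ^ k with hf
  have hfk : ∀ k : ℕ, f k = ((θ : ℂ) ^ k / k !) • A ^ k := by
    intro k
    simp only [hf, smul_pow, smul_smul]
    rw [div_eq_inv_mul, mul_comm]
  -- odd part has sum (sin θ) • A
  have hodd_sum : HasSum (fun m => f (2 * m + 1)) (((Real.sin θ : ℝ) : ℂ) • A) := by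
    rw [Complex.ofReal_sin]
    have hs := (Complex.hasSum_sin (θ : ℂ)).smul_const A
    refine HasSum.congr_fun hs fun m => ?_
    rw [hfk (2 * m + 1), hodd m, smul_smul]
    congr 1
    ring
  -- the scalar series for 1 - cos θ
  have hcos : HasSum (fun m : ℕ => (-1 : ℂ) ^ m * (θ : ℂ) ^ (2 * (m + 1)) / (2 * (m + 1))!)
      (1 - Complex.cos (θ : ℂ)) := by
    have hc := Complex.hasSum_cos (θ : ℂ)
    have hshift : HasSum
        (fun m : ℕ => (-1 : ℂ) ^ (m + 1) * (θ : ℂ) ^ (2 * (m + 1)) / (2 * (m + 1))!)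
        (Complex.cos (θ : ℂ) - 1) := by
      refine (hasSum_nat_add_iff (f := fun m : ℕ =>
        (-1 : ℂ) ^ m * (θ : ℂ) ^ (2 * m) / (2 * m)!) 1).mpr ?_
      simpa using hc
    have hneg := hshift.neg
    rw [neg_sub] at hneg
    refine hneg.congr_fun fun m => ?_
    rw [pow_succ]
    ring
  -- even part has sum (1 - cos θ) • A² + 1
  have heven_sum : HasSum (fun m => f (2 * m))
      ((1 - Complex.cos (θ : ℂ)) • A ^ 2 + 1) := by
    have hs := hcos.smul_const (A ^ 2)
    have hshift : HasSum (fun m : ℕ => f (2 * (m + 1)))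
        ((1 - Complex.cos (θ : ℂ)) • A ^ 2) := by
      refine hs.congr_fun fun m => ?_
      rw [hfk (2 * (m + 1)), heven m, smul_smul]
      congr 1
      ring
    have h0 : f 0 = 1 := by simp [hf]
    have := (hasSum_nat_add_iff (f := fun m : ℕ => f (2 * m)) 1).mp
      (hshift.congr_fun fun m => by rw [mul_add, mul_one])
    simpa [h0] using this
  -- combine
  have htotal := heven_sum.even_add_odd hodd_sum
  rw [exp_eq_tsum (𝕂 := ℂ)]
  refine htotal.tsum_eq.trans ?_
  have hc : ((1 - Real.cos θ : ℝ) : ℂ) = 1 - Complex.cos (θ : ℂ) := by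
    push_cast
    ring
  rw [hc]
  abel
end

section
/- Let n be a positive integer and let O be an n×n complex matrix satisfying O·O = 0 and O·Oᴴ·O = O. Then for every real θ, exp(θ·(O − Oᴴ)) = 1 + (sin θ)·(O − Oᴴ) + (cos θ − 1)·(O·Oᴴ + Oᴴ·O). -/
open NormedSpace Nat Matrix

lemma exp_smul_idem {𝔸 : Type*} [NormedRing 𝔸] [NormedAlgebra ℂ 𝔸] [CompleteSpace 𝔸]
    (Q : 𝔸) (hQ : Q * Q = Q) (c : ℂ) :
    NormedSpace.exp (c • Q) = 1 + (Complex.exp c - 1) • Q := by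
  have hQn : ∀ k : ℕ, Q ^ (k + 1) = Q := by
    intro k; induction k with
    | zero => simp
    | succ m ih => rw [pow_succ, ih, hQ]
  have h1 : HasSum (fun k : ℕ => (k !⁻¹ : ℂ) • (c • Q) ^ k) (NormedSpace.exp (c • Q)) :=
    exp_series_hasSum_exp' _
  have h2 : HasSum (fun k : ℕ => (k !⁻¹ : ℂ) * c ^ k) (Complex.exp c) := by
    have := exp_series_hasSum_exp' (𝕂 := ℂ) c
    rw [Complex.exp_eq_exp_ℂ]
    simpa [smul_eq_mul] using this
  have h3 : HasSum (fun k : ℕ => ((k !⁻¹ : ℂ) * c ^ k) • Q) (Complex.exp c • Q) :=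
    h2.smul_const Q
  have h4 : HasSum (fun k : ℕ => if k = 0 then (1 : 𝔸) - Q else 0) ((1 : 𝔸) - Q) :=
    hasSum_ite_eq 0 _
  have h5 := h3.add h4
  have heq : (fun k : ℕ => (k !⁻¹ : ℂ) • (c • Q) ^ k) =
      fun k : ℕ => ((k !⁻¹ : ℂ) * c ^ k) • Q + (if k = 0 then (1 : 𝔸) - Q else 0) := by
    funext k
    cases k with
    | zero => simp
    | succ m => simp [smul_pow, hQn m, smul_smul]
  rw [heq] at h1
  have := h1.unique h5
  rw [this, sub_smul, one_smul]
  abel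

/-- If `O·O = 0` and `O·Oᴴ·O = O`, then for every real `θ`,
`exp(θ(O - Oᴴ)) = 1 + (sin θ)(O - Oᴴ) + (cos θ - 1)(O·Oᴴ + Oᴴ·O)`. -/
theorem ansatz_unitary_closed_form (n : ℕ) (hn : 0 < n)
    (O : Matrix (Fin n) (Fin n) ℂ) (h1 : O * O = 0) (h2 : O * Oᴴ * O = O) (θ : ℝ) :
    NormedSpace.exp ((θ : ℂ) • (O - Oᴴ)) =
      1 + ((Real.sin θ : ℝ) : ℂ) • (O - Oᴴ) +
        (((Real.cos θ - 1 : ℝ)) : ℂ) • (O * Oᴴ + Oᴴ * O) := by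
  letI : SeminormedRing (Matrix (Fin n) (Fin n) ℂ) := Matrix.linftyOpSemiNormedRing
  letI : NormedRing (Matrix (Fin n) (Fin n) ℂ) := Matrix.linftyOpNormedRing
  letI : NormedAlgebra ℂ (Matrix (Fin n) (Fin n) ℂ) := Matrix.linftyOpNormedAlgebra
  set A : Matrix (Fin n) (Fin n) ℂ := O - Oᴴ with hA
  set P : Matrix (Fin n) (Fin n) ℂ := O * Oᴴ + Oᴴ * O with hP
  have h1' : Oᴴ * Oᴴ = 0 := by
    have := congrArg conjTranspose h1
    simpa [Matrix.conjTranspose_mul] using this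
  have h2' : Oᴴ * O * Oᴴ = Oᴴ := by
    have := congrArg conjTranspose h2
    simpa [Matrix.conjTranspose_mul, mul_assoc] using this
  have h2'' : O * (Oᴴ * O) = O := by rw [← mul_assoc]; exact h2
  have h2''' : Oᴴ * (O * Oᴴ) = Oᴴ := by rw [← mul_assoc]; exact h2'
  have hA2 : A * A = -P := by
    have e : A * A = O * O - O * Oᴴ - (Oᴴ * O - Oᴴ * Oᴴ) := by rw [hA]; noncomm_ring
    rw [e, h1, h1', hP]; abel
  have hPA : P * A = A := by
    have e : P * A = O * Oᴴ * O - O * (Oᴴ * Oᴴ) + (Oᴴ * (O * O) - Oᴴ * O * Oᴴ) := by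
      rw [hP, hA]; noncomm_ring
    rw [e, h1, h1', h2, h2', hA]; simp [sub_eq_add_neg]
  have hAP : A * P = A := by
    have e : A * P = O * (O * Oᴴ) + O * (Oᴴ * O) - (Oᴴ * (O * Oᴴ) + Oᴴ * (Oᴴ * O)) := by
      rw [hP, hA]; noncomm_ring
    have e1 : O * (O * Oᴴ) = 0 := by rw [← mul_assoc, h1, zero_mul]
    have e2 : Oᴴ * (Oᴴ * O) = 0 := by rw [← mul_assoc, h1', zero_mul]
    rw [e, e1, e2, h2'', h2''', hA]; abel
  have hP2 : P * P = P := by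
    have e : P * P = O * Oᴴ * (O * Oᴴ) + O * (Oᴴ * Oᴴ) * O + Oᴴ * (O * O) * Oᴴ +
        Oᴴ * O * (Oᴴ * O) := by rw [hP]; noncomm_ring
    have e1 : O * Oᴴ * (O * Oᴴ) = O * Oᴴ := by rw [← mul_assoc, h2]
    have e2 : Oᴴ * O * (Oᴴ * O) = Oᴴ * O := by rw [← mul_assoc, h2']
    rw [e, e1, e2, h1, h1', hP]; simp
  set Q1 : Matrix (Fin n) (Fin n) ℂ := (2⁻¹ : ℂ) • (P + Complex.I • A) with hQ1def
  set Q2 : Matrix (Fin n) (Fin n) ℂ := (2⁻¹ : ℂ) • (P - Complex.I • A) with hQ2def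
  have expand : ∀ (a b : ℂ), ((2⁻¹ : ℂ) • (P + a • A)) * ((2⁻¹ : ℂ) • (P + b • A)) =
      (4⁻¹ : ℂ) • P + ((4⁻¹ : ℂ) * b) • A + ((4⁻¹ : ℂ) * a) • A +
        ((4⁻¹ : ℂ) * (a * b)) • (-P) := by
    intro a b
    simp only [smul_mul_assoc, mul_smul_comm, mul_add, add_mul, smul_add, smul_smul,
      hP2, hPA, hAP, hA2]
    match_scalars <;> ring
  have hQ1 : Q1 * Q1 = Q1 := by
    rw [hQ1def]
    rw [expand Complex.I Complex.I]
    match_scalars <;>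
      first
        | ring1
        | (ring_nf; simp [Complex.I_sq, Complex.I_mul_I]; try ring1)
  have hQ2 : Q2 * Q2 = Q2 := by
    have : Q2 = (2⁻¹ : ℂ) • (P + (-Complex.I) • A) := by rw [hQ2def]; module
    rw [this, expand]
    match_scalars <;>
      first
        | ring1
        | (ring_nf; simp [Complex.I_sq, Complex.I_mul_I]; try ring1)
  have hQ12 : Q1 * Q2 = 0 := by
    have : Q2 = (2⁻¹ : ℂ) • (P + (-Complex.I) • A) := by rw [hQ2def]; module
    rw [this, hQ1def, expand]
    match_scalars <;>
      first
        | ring1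
        | (ring_nf; simp [Complex.I_sq, Complex.I_mul_I]; try ring1)
  have hQ21 : Q2 * Q1 = 0 := by
    have : Q2 = (2⁻¹ : ℂ) • (P + (-Complex.I) • A) := by rw [hQ2def]; module
    rw [this, hQ1def, expand]
    match_scalars <;>
      first
        | ring1
        | (ring_nf; simp [Complex.I_sq, Complex.I_mul_I]; try ring1)
  set c : ℂ := Complex.I * θ with hc
  have key : (θ : ℂ) • A = (-c) • Q1 + c • Q2 := by
    rw [hQ1def, hQ2def, hc]
    match_scalars <;>
      first
        | ring1
        | (ring_nf; simp [Complex.I_sq, Complex.I_mul_I]; try ring1)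
  have hcomm : Commute ((-c) • Q1) (c • Q2) := by
    have h : Commute Q1 Q2 := hQ12.trans hQ21.symm
    exact (h.smul_left _).smul_right _
  rw [key, Matrix.exp_add_of_commute _ _ hcomm]; erw [exp_smul_idem Q1 hQ1, exp_smul_idem Q2 hQ2]
  have hsin : ((Real.sin θ : ℝ) : ℂ) = (Complex.exp (-c) - Complex.exp c) * Complex.I / 2 := by
    rw [Complex.ofReal_sin, Complex.sin, hc]
    ring_nf
  have hcos : ((Real.cos θ : ℝ) : ℂ) = (Complex.exp (-c) + Complex.exp c) / 2 := by
    rw [Complex.ofReal_cos, Complex.cos, hc]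
    ring_nf
  rw [Complex.ofReal_sub, Complex.ofReal_one, hsin, hcos]
  simp only [mul_add, add_mul, one_mul, mul_one, smul_mul_assoc, mul_smul_comm, smul_smul,
    hQ12, smul_zero, add_zero]
  rw [hQ1def, hQ2def]
  match_scalars <;>
      first
        | ring1
        | (ring_nf; simp [Complex.I_sq, Complex.I_mul_I]; try ring1)
end
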